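/- For families of rationals a = (a_{g,b})_{g,b ∈ ℕ} and each r ∈ ℕ, define the polynomial P_r^a(y) = Σ_{k=0}^{r} Σ_{t=0}^{k} a_{t,k−t} · C(r,k) · (y−t)_{2(r−k)}, where (x)_j denotes the falling factorial x(x−1)⋯(x−j+1) and C(r,k) is a binomial coefficient. If a and a' are two such families with P_r^a = P_r^{a'} as polynomials in y for every r ∈ ℕ, then a_{t,k−t} = a'_{t,k−t} for all t, k ∈ ℕ with t ≤ k. In other words, the values a_{t,k−t} are uniquely determined by the sequence of polynomials (P_r^a)_{r ∈ ℕ}. -/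
import Mathlib

open Polynomial Finset

/-- `Qp N m` is the coefficient of `X^m` in `(descPochhammer N).comp (X - C t)`,
as a polynomial in `t`. -/
noncomputable def Qp : ℕ → ℕ → Polynomial ℚ
  | 0, 0 => 1
  | 0, _ + 1 => 0
  | (N+1), 0 => -(X + C (N : ℚ)) * Qp N 0
  | (N+1), (m+1) => Qp N m - (X + C (N : ℚ)) * Qp N (m+1)

lemma Qp_eval (N : ℕ) : ∀ (m : ℕ) (t : ℚ),
    ((descPochhammer ℚ N).comp (X - C t)).coeff m = (Qp N m).eval t := by
  induction N with
  | zero =>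
    intro m t
    cases m with
    | zero => simp [Qp]
    | succ m => simp [Qp, coeff_one]
  | succ N ih =>
    intro m t
    have hcomp : (descPochhammer ℚ (N+1)).comp (X - C t)
        = (descPochhammer ℚ N).comp (X - C t) * (X - C (t + N)) := by
      rw [descPochhammer_succ_right, mul_comp, sub_comp, X_comp, natCast_comp]
      rw [map_add, C_eq_natCast]
      ring
    rw [hcomp]
    cases m with
    | zero =>
      rw [mul_coeff_zero, ih 0 t]
      simp [Qp]
      ring
    | succ m =>
      rw [coeff_mul_X_sub_C, ih m t, ih (m+1) t]
      simp [Qp]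
      ring

lemma Qp_zero (N : ℕ) : ∀ m : ℕ, N < m → Qp N m = 0 := by
  induction N with
  | zero => intro m hm; cases m with
    | zero => omega
    | succ m => rfl
  | succ N ih =>
    intro m hm
    cases m with
    | zero => omega
    | succ m =>
      show Qp N m - (X + C (N : ℚ)) * Qp N (m+1) = 0
      rw [ih m (by omega), ih (m+1) (by omega)]
      ring

lemma Qp_natDegree (N : ℕ) : ∀ m : ℕ, (Qp N m).natDegree ≤ N - m := by
  induction N with
  | zero =>
    intro m; cases m with
    | zero => show (1 : Polynomial ℚ).natDegree ≤ 0; simp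
    | succ m => show (0 : Polynomial ℚ).natDegree ≤ 0 - (m+1); simp
  | succ N ih =>
    intro m
    cases m with
    | zero =>
      show (-(X + C (N : ℚ)) * Qp N 0).natDegree ≤ N + 1
      calc (-(X + C (N : ℚ)) * Qp N 0).natDegree
          ≤ (-(X + C (N : ℚ))).natDegree + (Qp N 0).natDegree := natDegree_mul_le
        _ ≤ 1 + N := by
            gcongr
            · rw [natDegree_neg]
              exact (natDegree_X_add_C _).le
            · simpa using ih 0
        _ = N + 1 := by omega
    | succ m =>
      show (Qp N m - (X + C (N : ℚ)) * Qp N (m+1)).natDegree ≤ N + 1 - (m+1)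
      by_cases hm : N < m + 1
      · rcases Nat.lt_or_ge N m with h | h
        · rw [Qp_zero N m h, Qp_zero N (m+1) (by omega)]
          simp
        · have hNm : N = m := by omega
          subst hNm
          rw [Qp_zero N (N+1) (by omega)]
          simpa using ih N
      · refine (natDegree_sub_le _ _).trans ?_
        have h1 : (Qp N m).natDegree ≤ N - m := ih m
        have h2 : ((X + C (N : ℚ)) * Qp N (m+1)).natDegree ≤ 1 + (N - (m+1)) := by
          calc ((X + C (N : ℚ)) * Qp N (m+1)).natDegree
              ≤ (X + C (N : ℚ)).natDegree + (Qp N (m+1)).natDegree := natDegree_mul_le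
            _ ≤ 1 + (N - (m+1)) := by
                gcongr
                · exact (natDegree_X_add_C _).le
                · exact ih (m+1)
        refine max_le (h1.trans (by omega)) (h2.trans (by omega))

lemma Qp_coeff_top (N : ℕ) : ∀ m : ℕ, m ≤ N →
    (Qp N m).coeff (N - m) = (-1) ^ (N - m) * (N.choose m) := by
  induction N with
  | zero =>
    intro m hm
    interval_cases m
    show (1 : Polynomial ℚ).coeff 0 = _
    simp
  | succ N ih =>
    intro m hm
    cases m with
    | zero =>
      show (-(X + C (N : ℚ)) * Qp N 0).coeff (N+1) = _
      have hd : (Qp N 0).coeff (N+1) = 0 :=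
        coeff_eq_zero_of_natDegree_lt (lt_of_le_of_lt (Qp_natDegree N 0) (by omega))
      rw [neg_mul, coeff_neg, add_mul, coeff_add, X_mul, coeff_mul_X, coeff_C_mul, hd]
      have e1 := ih 0 (by omega)
      rw [Nat.sub_zero] at e1
      rw [e1]
      simp [pow_succ]
    | succ m =>
      show (Qp N m - (X + C (N : ℚ)) * Qp N (m+1)).coeff (N + 1 - (m+1)) = _
      have hNm : N + 1 - (m + 1) = N - m := by omega
      rw [hNm, coeff_sub]
      by_cases hm' : m + 1 ≤ N
      · have e1 : (Qp N m).coeff (N - m) = (-1) ^ (N - m) * (N.choose m) := ih m (by omega)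
        have e2 : (Qp N (m+1)).coeff (N - (m+1)) = (-1) ^ (N - (m+1)) * (N.choose (m+1)) :=
          ih (m+1) hm'
        have e3 : (Qp N (m+1)).coeff (N - m) = 0 :=
          coeff_eq_zero_of_natDegree_lt (lt_of_le_of_lt (Qp_natDegree N (m+1)) (by omega))
        have hsub : N - m = (N - (m+1)) + 1 := by omega
        rw [add_mul, coeff_add, X_mul, hsub, coeff_mul_X, coeff_C_mul, ← hsub, e1, e2, e3]
        rw [Nat.choose_succ_succ N m]
        have : (-1 : ℚ) ^ (N - m) = -(-1 : ℚ) ^ (N - (m+1)) := by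
          rw [hsub, pow_succ]; ring
        rw [this]
        push_cast
        ring
      · -- m = N
        have hNm2 : m = N := by omega
        subst hNm2
        have e3 : Qp m (m+1) = 0 := Qp_zero m (m+1) (by omega)
        have e1 : (Qp m m).coeff (m - m) = (-1 : ℚ) ^ (m - m) * (m.choose m) := ih m le_rfl
        rw [e3, mul_zero, coeff_zero, sub_zero, e1]
        simp

lemma block_eval (e : ℕ → ℚ) (ch : ℚ) (N m L B : ℕ) (hB : N - m = B) (hmN : m ≤ N)
    (hlow : ∀ p < B, ∑ t ∈ Finset.range (L+1), e t * (t:ℚ)^p = 0) :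
    ∑ t ∈ Finset.range (L+1), e t * ch * (Qp N m).eval (t:ℚ)
      = ch * ((-1:ℚ)^B * (N.choose m : ℚ)) * ∑ t ∈ Finset.range (L+1), e t * (t:ℚ)^B := by
  have hQdeg : (Qp N m).natDegree < B + 1 := Nat.lt_succ_of_le (hB ▸ Qp_natDegree N m)
  calc ∑ t ∈ Finset.range (L+1), e t * ch * (Qp N m).eval (t:ℚ)
      = ∑ t ∈ Finset.range (L+1), ∑ p ∈ Finset.range (B+1),
          (Qp N m).coeff p * (ch * (e t * (t:ℚ)^p)) := by
        refine Finset.sum_congr rfl fun t _ => ?_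
        rw [eval_eq_sum_range' hQdeg, Finset.mul_sum]
        exact Finset.sum_congr rfl fun p _ => by ring
    _ = ∑ p ∈ Finset.range (B+1),
          (Qp N m).coeff p * (ch * ∑ t ∈ Finset.range (L+1), e t * (t:ℚ)^p) := by
        rw [Finset.sum_comm]
        exact Finset.sum_congr rfl fun p _ => by rw [Finset.mul_sum, Finset.mul_sum]
    _ = (Qp N m).coeff B * (ch * ∑ t ∈ Finset.range (L+1), e t * (t:ℚ)^B) := by
        rw [Finset.sum_range_succ, Finset.sum_eq_zero, zero_add]
        intro p hp
        rw [hlow p (Finset.mem_range.mp hp), mul_zero, mul_zero]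
    _ = ch * ((-1:ℚ)^B * (N.choose m : ℚ)) * ∑ t ∈ Finset.range (L+1), e t * (t:ℚ)^B := by
        rw [← hB, Qp_coeff_top N m hmN, hB]
        ring

/-- Triangular elimination: a zero linear combination of polynomials with strictly
decreasing degrees and nonzero leading coefficients has zero scalar coefficients. -/
lemma elim_tri (q D : ℕ) (hqD : q ≤ D) (c : ℕ → ℚ) (A : ℕ → Polynomial ℚ)
    (hdeg : ∀ i ≤ q, (A i).natDegree = D - i)
    (hlead : ∀ i ≤ q, (A i).leadingCoeff ≠ 0)
    (hsum : ∑ i ∈ range (q+1), C (c i) * A i = 0) :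
    ∀ i ≤ q, c i = 0 := by
  intro i
  induction i using Nat.strong_induction_on with
  | _ i ihi =>
  intro hi
  have hc := congrArg (fun P => Polynomial.coeff P (D - i)) hsum
  simp only [finset_sum_coeff, coeff_C_mul, coeff_zero] at hc
  rw [Finset.sum_eq_single i] at hc
  · have hAi : (A i).coeff (D - i) = (A i).leadingCoeff := by
      rw [leadingCoeff, hdeg i hi]
    rw [hAi] at hc
    exact (mul_eq_zero.mp hc).resolve_right (hlead i hi)
  · intro b hb hbi
    have hb' : b ≤ q := by simpa using Nat.lt_succ_iff.mp (Finset.mem_range.mp hb)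
    rcases Nat.lt_or_ge b i with h | h
    · rw [ihi b h hb', zero_mul]
    · have hbgt : i < b := lt_of_le_of_ne h (Ne.symm hbi)
      rw [coeff_eq_zero_of_natDegree_lt, mul_zero]
      rw [hdeg b hb']
      omega
  · intro habs
    exact absurd (Finset.mem_range.mpr (by omega)) habs

lemma A_facts (a b : ℕ) (u : ℚ) :
    (descPochhammer ℚ a * (descPochhammer ℚ b).comp (C 2 * X - C u)).natDegree = a + b ∧
    (descPochhammer ℚ a * (descPochhammer ℚ b).comp (C 2 * X - C u)).leadingCoeff = 2 ^ b := by
  have hq : (C (2:ℚ) * X - C u) = C (2:ℚ) * X + C (-u) := by rw [map_neg]; ring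
  have hqdeg : (C (2:ℚ) * X - C u).natDegree = 1 := by
    rw [hq]; exact natDegree_linear two_ne_zero
  have hqlead : (C (2:ℚ) * X - C u).leadingCoeff = 2 := by
    rw [hq]; exact leadingCoeff_linear two_ne_zero
  have hcompdeg : ((descPochhammer ℚ b).comp (C 2 * X - C u)).natDegree = b := by
    rw [natDegree_comp, hqdeg, descPochhammer_natDegree, mul_one]
  have hcomplead : ((descPochhammer ℚ b).comp (C 2 * X - C u)).leadingCoeff = 2 ^ b := by
    rw [leadingCoeff_comp (by rw [hqdeg]; exact one_ne_zero), hqlead,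
      (monic_descPochhammer ℚ b).leadingCoeff, one_mul, descPochhammer_natDegree]
  have hne : (descPochhammer ℚ b).comp (C 2 * X - C u) ≠ 0 := by
    intro h0
    rw [h0, leadingCoeff_zero] at hcomplead
    exact (pow_ne_zero b (two_ne_zero (α := ℚ))) hcomplead.symm
  constructor
  · rw [(monic_descPochhammer ℚ a).natDegree_mul' hne, descPochhammer_natDegree, hcompdeg]
  · rw [leadingCoeff_mul, (monic_descPochhammer ℚ a).leadingCoeff, one_mul, hcomplead]

lemma A_eval (a b : ℕ) (v : ℕ) (r : ℕ) (hvr : v ≤ r) :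
    (descPochhammer ℚ a * (descPochhammer ℚ b).comp (C 2 * X - C ((2*v : ℕ) : ℚ))).eval
      ((r : ℕ) : ℚ)
    = (Nat.factorial a * r.choose a : ℚ) * (Nat.factorial b * ((2*(r-v)).choose b) : ℚ) := by
  rw [eval_mul, eval_comp]
  have h1 : eval ((r:ℕ):ℚ) (C 2 * X - C ((2*v : ℕ) : ℚ)) = ((2*(r-v) : ℕ) : ℚ) := by
    push_cast [Nat.cast_sub hvr]
    simp
    ring
  rw [h1, descPochhammer_eval_eq_descFactorial, descPochhammer_eval_eq_descFactorial,
    Nat.descFactorial_eq_factorial_mul_choose, Nat.descFactorial_eq_factorial_mul_choose]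
  push_cast
  ring

/-- The polynomial `P_r(y) = Σ_{k=0}^{r} Σ_{t=0}^{k} a_{t,k−t} · C(r,k) · (y−t)_{2(r−k)}`
in the variable `y`, built from the family of rationals `a`. -/
noncomputable def Pfam (a : ℕ → ℕ → ℚ) (r : ℕ) : Polynomial ℚ :=
  ∑ k ∈ Finset.range (r + 1), ∑ t ∈ Finset.range (k + 1),
    C (a t (k - t) * (r.choose k : ℚ)) *
      (descPochhammer ℚ (2 * (r - k))).comp (X - C (t : ℚ))

/-- The unknowns `a_{t,k−t}` are uniquely determined by the polynomials `P_r`: if two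
families give the same polynomials for every `r`, then they agree. -/
theorem Pfam_determines_coefficients (a a' : ℕ → ℕ → ℚ)
    (h : ∀ r : ℕ, Pfam a r = Pfam a' r) :
    ∀ t k : ℕ, t ≤ k → a t (k - t) = a' t (k - t) := by
  set d : ℕ → ℕ → ℚ := fun t m => a t m - a' t m with hd_def
  have hd0 : ∀ r : ℕ, (∑ k ∈ Finset.range (r + 1), ∑ t ∈ Finset.range (k + 1),
      C (d t (k - t) * (r.choose k : ℚ)) *
        (descPochhammer ℚ (2 * (r - k))).comp (X - C (t : ℚ))) = 0 := by
    intro r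
    have hz : Pfam a r - Pfam a' r = 0 := by rw [h r, sub_self]
    rw [← hz, Pfam, Pfam, ← Finset.sum_sub_distrib]
    refine Finset.sum_congr rfl fun k _ => ?_
    rw [← Finset.sum_sub_distrib]
    refine Finset.sum_congr rfl fun t _ => ?_
    rw [← sub_mul, ← map_sub, ← sub_mul]
  suffices hS : ∀ k t, t ≤ k → d t (k - t) = 0 by
    intro t k htk
    have := hS k t htk
    simpa [hd_def, sub_eq_zero] using this
  intro k
  induction k using Nat.strong_induction_on with
  | _ k IH =>
  -- moments vanish
  have hMzero : ∀ j i p, p + 2*i = j →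
      ∑ t ∈ Finset.range (k+i+1), d t (k+i-t) * (t:ℚ)^p = 0 := by
    intro j
    induction j using Nat.strong_induction_on with
    | _ j Sih =>
    -- the key relation
    have hrel : ∀ r : ℕ, k + j ≤ r →
        ∑ i ∈ Finset.range (j/2 + 1),
          (r.choose (k+i) : ℚ) * ((2*(r-k-i)).choose (j-2*i) : ℚ) *
            ∑ t ∈ Finset.range (k+i+1), d t (k+i-t) * (t:ℚ)^(j-2*i) = 0 := by
      intro r hr
      have hc := congrArg (fun P => P.coeff (2*(r-k) - j)) (hd0 r)
      simp only [finset_sum_coeff, coeff_C_mul, coeff_zero, Qp_eval] at hc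
      rw [Finset.range_eq_Ico,
        ← Finset.sum_Ico_consecutive _ (Nat.zero_le k) (by omega : k ≤ r + 1),
        ← Finset.sum_Ico_consecutive _ (by omega : k ≤ k + (j/2+1))
            (by omega : k + (j/2+1) ≤ r + 1)] at hc
      simp only [← Finset.range_eq_Ico] at hc
      have hlow0 : (∑ k' ∈ Finset.range k, ∑ t ∈ Finset.range (k'+1),
          d t (k'-t) * (r.choose k' : ℚ) * (Qp (2*(r-k')) (2*(r-k)-j)).eval (t:ℚ)) = 0 := by
        refine Finset.sum_eq_zero fun k' hk' => Finset.sum_eq_zero fun t ht => ?_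
        rw [IH k' (Finset.mem_range.mp hk') t (by
          have := Finset.mem_range.mp ht; omega), zero_mul, zero_mul]
      have hhigh0 : (∑ k' ∈ Finset.Ico (k + (j/2+1)) (r+1), ∑ t ∈ Finset.range (k'+1),
          d t (k'-t) * (r.choose k' : ℚ) * (Qp (2*(r-k')) (2*(r-k)-j)).eval (t:ℚ)) = 0 := by
        refine Finset.sum_eq_zero fun k' hk' => Finset.sum_eq_zero fun t ht => ?_
        have hk'' := Finset.mem_Ico.mp hk'
        rw [Qp_zero (2*(r-k')) (2*(r-k)-j) (by omega), eval_zero, mul_zero]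
      rw [hlow0, hhigh0, zero_add, add_zero, Finset.sum_Ico_eq_sum_range] at hc
      simp only [show k + (j/2+1) - k = j/2 + 1 from by omega] at hc
      -- now hc : ∑ i ∈ range (j/2+1), ∑ t ∈ range (k+i+1), d t (k+i-t) * ch * Qp.eval = 0
      have hblock : ∀ i ∈ Finset.range (j/2+1),
          (∑ t ∈ Finset.range (k+i+1),
            d t (k+i-t) * (r.choose (k+i) : ℚ) * (Qp (2*(r-(k+i))) (2*(r-k)-j)).eval (t:ℚ))
          = (-1:ℚ)^j * ((r.choose (k+i) : ℚ) * ((2*(r-k-i)).choose (j-2*i) : ℚ) *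
              ∑ t ∈ Finset.range (k+i+1), d t (k+i-t) * (t:ℚ)^(j-2*i)) := by
        intro i hi
        have hij : 2*i ≤ j := by
          have := Finset.mem_range.mp hi; omega
        have hNi : 2*(r-(k+i)) = 2*(r-k-i) := by omega
        rw [hNi]
        rw [block_eval (fun t => d t (k+i-t)) _ _ _ _ (j-2*i) (by omega) (by omega)
          (fun p hp => Sih (p + 2*i) (by omega) i p rfl)]
        rw [← Nat.choose_symm (by omega : 2*(r-k)-j ≤ 2*(r-k-i)),
          show 2*(r-k-i) - (2*(r-k)-j) = j - 2*i from by omega]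
        have hsign : (-1:ℚ)^(j-2*i) = (-1:ℚ)^j := by
          rw [show j = (j - 2*i) + 2*i from by omega, pow_add, pow_mul]
          norm_num
        rw [hsign]
        ring
      rw [Finset.sum_congr rfl hblock, ← Finset.mul_sum] at hc
      have := (mul_eq_zero.mp hc).resolve_left (by
        exact pow_ne_zero _ (by norm_num))
      exact this
    -- eliminate via polynomial identity
    intro i p hip
    have hiq : i ≤ j/2 := by omega
    set A : ℕ → Polynomial ℚ := fun i' =>
      descPochhammer ℚ (k+i') *
        (descPochhammer ℚ (j-2*i')).comp (C 2 * X - C ((2*(k+i') : ℕ) : ℚ)) with hA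
    set c : ℕ → ℚ := fun i' =>
      (∑ t ∈ Finset.range (k+i'+1), d t (k+i'-t) * (t:ℚ)^(j-2*i')) /
        ((Nat.factorial (k+i') : ℚ) * (Nat.factorial (j-2*i') : ℚ)) with hcdef
    have hF : ∑ i' ∈ Finset.range (j/2+1), C (c i') * A i' = 0 := by
      apply eq_zero_of_infinite_isRoot
      apply Set.infinite_of_injective_forall_mem
        (f := fun nn : ℕ => ((k + j + nn : ℕ) : ℚ))
      · intro x y hxy
        have : ((k+j+x : ℕ) : ℚ) = ((k+j+y : ℕ) : ℚ) := hxy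
        rw [Nat.cast_inj] at this
        omega
      · intro nn
        show IsRoot _ _
        rw [IsRoot, eval_finset_sum]
        have hterm : ∀ i' ∈ Finset.range (j/2+1),
            (C (c i') * A i').eval ((k+j+nn : ℕ) : ℚ)
            = ((k+j+nn).choose (k+i') : ℚ) * ((2*((k+j+nn)-k-i')).choose (j-2*i') : ℚ) *
                ∑ t ∈ Finset.range (k+i'+1), d t (k+i'-t) * (t:ℚ)^(j-2*i') := by
          intro i' hi'
          have hij : 2*i' ≤ j := by
            have := Finset.mem_range.mp hi'; omega
          rw [eval_mul, eval_C, hA]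
          rw [A_eval (k+i') (j-2*i') (k+i') (k+j+nn) (by omega)]
          rw [hcdef]
          have h1 : (Nat.factorial (k+i') : ℚ) ≠ 0 := by
            exact_mod_cast Nat.factorial_ne_zero _
          have h2 : (Nat.factorial (j-2*i') : ℚ) ≠ 0 := by
            exact_mod_cast Nat.factorial_ne_zero _
          rw [show (k+j+nn) - (k+i') = (k+j+nn) - k - i' from by omega]
          field_simp
        rw [Finset.sum_congr rfl hterm]
        exact hrel (k+j+nn) (by omega)
    have hzero := elim_tri (j/2) (k+j) (by omega) c A
      (fun i' hi' => by
        rw [hA]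
        rw [(A_facts (k+i') (j-2*i') _).1]
        omega)
      (fun i' hi' => by
        rw [hA, (A_facts (k+i') (j-2*i') _).2]
        positivity)
      hF i hiq
    rw [hcdef] at hzero
    have h1 : (Nat.factorial (k+i) : ℚ) ≠ 0 := by exact_mod_cast Nat.factorial_ne_zero _
    have h2 : (Nat.factorial (j-2*i) : ℚ) ≠ 0 := by exact_mod_cast Nat.factorial_ne_zero _
    have := div_eq_zero_iff.mp hzero
    rcases this with h' | h'
    · rw [show j - 2*i = p from by omega] at h'
      exact h'
    · exact absurd h' (mul_ne_zero h1 h2)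
  -- Vandermonde step
  intro t₀ ht₀
  set L : Polynomial ℚ := ∏ t' ∈ (Finset.range (k+1)).erase t₀, (X - C (t' : ℚ)) with hLdef
  have hLdeg : L.natDegree < k + 1 := by
    apply Nat.lt_succ_of_le
    refine le_trans (natDegree_prod_le _ _) ?_
    calc ∑ t' ∈ (Finset.range (k+1)).erase t₀, (X - C (t' : ℚ)).natDegree
        = ∑ t' ∈ (Finset.range (k+1)).erase t₀, 1 := by
          exact Finset.sum_congr rfl fun t' _ => natDegree_X_sub_C _
      _ = ((Finset.range (k+1)).erase t₀).card := by simp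
      _ ≤ k := by
          rw [Finset.card_erase_of_mem (Finset.mem_range.mpr (by omega))]
          simp
  have hsum0 : ∑ t ∈ Finset.range (k+1), d t (k-t) * L.eval (t:ℚ) = 0 := by
    calc ∑ t ∈ Finset.range (k+1), d t (k-t) * L.eval (t:ℚ)
        = ∑ t ∈ Finset.range (k+1), ∑ p ∈ Finset.range (k+1),
            L.coeff p * (d t (k-t) * (t:ℚ)^p) := by
          refine Finset.sum_congr rfl fun t _ => ?_
          rw [eval_eq_sum_range' hLdeg, Finset.mul_sum]
          exact Finset.sum_congr rfl fun p _ => by ring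
      _ = ∑ p ∈ Finset.range (k+1),
            L.coeff p * ∑ t ∈ Finset.range (k+1), d t (k-t) * (t:ℚ)^p := by
          rw [Finset.sum_comm]
          exact Finset.sum_congr rfl fun p _ => by rw [Finset.mul_sum]
      _ = 0 := by
          refine Finset.sum_eq_zero fun p _ => ?_
          have hm := hMzero p 0 p rfl
          simp only [Nat.add_zero] at hm
          rw [hm, mul_zero]
  have hsingle : ∑ t ∈ Finset.range (k+1), d t (k-t) * L.eval (t:ℚ)
      = d t₀ (k-t₀) * L.eval (t₀:ℚ) := by
    refine Finset.sum_eq_single t₀ (fun b hb hbne => ?_) (fun habs => ?_)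
    · have : L.eval ((b:ℕ):ℚ) = 0 := by
        rw [hLdef, eval_prod]
        refine Finset.prod_eq_zero (Finset.mem_erase.mpr ⟨hbne, hb⟩) ?_
        simp
      rw [this, mul_zero]
    · exact absurd (Finset.mem_range.mpr (by omega)) habs
  have hLne : L.eval ((t₀:ℕ):ℚ) ≠ 0 := by
    rw [hLdef, eval_prod]
    refine Finset.prod_ne_zero_iff.mpr fun t' ht' => ?_
    have ht'' := Finset.mem_erase.mp ht'
    simp only [eval_sub, eval_X, eval_C, sub_ne_zero]
    exact_mod_cast fun hh => ht''.1 (by exact_mod_cast hh.symm)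
  rw [hsum0] at hsingle
  exact ((mul_eq_zero.mp hsingle.symm).resolve_right hLne)
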